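/- arXiv:1608.07073 — 5 statements merged into one kernel-verified Lean document; each statement's English description precedes it below -/
import Mathlib

section
/- Let m ∈ ℤ and let c : ℤ × ℤ → ℚ be a function satisfying (i) c(n,d) = c(−n,d) for all n,d ∈ ℤ, and (ii) c(n,d) = c(−n−2m, d+n+m) for all n,d ∈ ℤ. Then for every λ ∈ ℤ and all n,d ∈ ℤ one has c(n,d) = c(n+2mλ, d+λn+mλ²). -/
/-! Composing the reflection `(n, d) ↦ (-n, d)` with hypothesis (ii) shows that `c` is invariant
under `(n, d) ↦ (n + 2m, d + n + m)`. This map is the case `λ = 1` of the maps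
`(n, d) ↦ (n + 2mλ, d + λn + mλ²)`, which form an action of `ℤ` on `ℤ × ℤ`, so invariance under
the generator gives invariance under every `λ`. -/

def ellipticShift (m lam : ℤ) (p : ℤ × ℤ) : ℤ × ℤ :=
  (p.1 + 2 * m * lam, p.2 + lam * p.1 + m * lam ^ 2)

theorem ellipticShift_zero (m : ℤ) (p : ℤ × ℤ) : ellipticShift m 0 p = p := by
  simp [ellipticShift]

theorem ellipticShift_add (m a b : ℤ) (p : ℤ × ℤ) :
    ellipticShift m (a + b) p = ellipticShift m a (ellipticShift m b p) := by
  simp only [ellipticShift, Prod.mk.injEq]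
  constructor <;> ring

theorem apply_ellipticShift_eq_of_apply_ellipticShift_one {α : Type*} {m : ℤ} {f : ℤ × ℤ → α}
    (hf : ∀ p, f (ellipticShift m 1 p) = f p) (lam : ℤ) (p : ℤ × ℤ) :
    f (ellipticShift m lam p) = f p := by
  induction lam using Int.induction_on generalizing p with
  | zero => rw [ellipticShift_zero]
  | succ k ih => rw [add_comm, ellipticShift_add, hf, ih]
  | pred k ih =>
    have hf_neg : ∀ q, f (ellipticShift m (-1) q) = f q := fun q => by
      rw [← hf, ← ellipticShift_add, add_neg_cancel, ellipticShift_zero]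
    rw [sub_eq_add_neg, ellipticShift_add, ih, hf_neg]

/-- If `c : ℤ × ℤ → ℚ` satisfies `c (n, d) = c (-n, d)` and
`c (n, d) = c (-n - 2*m, d + n + m)` for all `n d`, then for every `λ n d` one has
`c (n, d) = c (n + 2*m*λ, d + λ*n + m*λ^2)`. -/
theorem elliptic_transformation_coefficients
    (m : ℤ) (c : ℤ × ℤ → ℚ)
    (h1 : ∀ n d : ℤ, c (n, d) = c (-n, d))
    (h2 : ∀ n d : ℤ, c (n, d) = c (-n - 2 * m, d + n + m)) :
    ∀ lam n d : ℤ, c (n, d) = c (n + 2 * m * lam, d + lam * n + m * lam ^ 2) := by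
  have hc : ∀ p, c (ellipticShift m 1 p) = c p := by
    rintro ⟨n, d⟩
    rw [h1, h2 n d]
    simp only [ellipticShift]
    ring_nf
  intro lam n d
  exact (apply_ellipticShift_eq_of_apply_ellipticShift_one hc lam (n, d)).symm
end

section
/- Let h ≥ 0 be an integer and let c : ℤ × ℤ → ℚ be a function satisfying: (i) c(n,d) = 0 whenever d < 0; (ii) c(n,d) = c(n + 2(h−1)λ, d + λn + (h−1)λ²) for all n, d, λ ∈ ℤ; (iii) for every d ≥ 0, if c(n,d) ≠ 0 for some n ∈ ℤ, then there exists an integer n′ ≥ h with c(n′,d) ≠ 0. Then c(n,d) = 0 for all n, d ∈ ℤ. -/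
/-- Vanishing lemma for coefficients satisfying the elliptic
transformation law of index `h - 1`, supported in degrees `d ≥ 0`, and such that every
nonzero `t`-coefficient has a nonzero `q`-coefficient in degree at least `h`. -/
theorem vanishing_of_elliptic_coefficients
    (h : ℤ) (hh : 0 ≤ h) (c : ℤ × ℤ → ℚ)
    (h1 : ∀ n d : ℤ, d < 0 → c (n, d) = 0)
    (h2 : ∀ n d lam : ℤ,
      c (n, d) = c (n + 2 * (h - 1) * lam, d + lam * n + (h - 1) * lam ^ 2))
    (h3 : ∀ d : ℤ, 0 ≤ d → (∃ n : ℤ, c (n, d) ≠ 0) →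
      ∃ n' : ℤ, h ≤ n' ∧ c (n', d) ≠ 0) :
    ∀ n d : ℤ, c (n, d) = 0 := by
  have key : ∀ k : ℕ, ∀ n d : ℤ, d = (k : ℤ) → c (n, d) = 0 := by
    intro k
    induction k using Nat.strong_induction_on with
    | _ k ih =>
      intro n d hd
      by_contra hne
      obtain ⟨n', hn', hc⟩ := h3 d (by omega) ⟨n, hne⟩
      have htr := h2 n' d (-1)
      set d' : ℤ := d + (-1) * n' + (h - 1) * (-1) ^ 2 with hd'
      have hlt : d' < d := by simp only [hd']; nlinarith
      rcases lt_or_ge d' 0 with hneg | hpos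
      · exact hc (htr.trans (h1 _ _ hneg))
      · have : c (n' + 2 * (h - 1) * (-1), d') = 0 := by
          apply ih d'.toNat (by omega) _ _ (by omega)
        exact hc (htr.trans this)
  intro n d
  rcases lt_or_ge d 0 with hneg | hpos
  · exact h1 n d hneg
  · exact key d.toNat n d (by omega)
end

section
/- Let ι : ℚ(q)[[t]] → ℚ((q))[[t]] be the map applying to each t-coefficient the Laurent expansion at q = 0. Define ℘(q⁻¹t, t) ∈ ℚ((q))[[t]] as the series obtained from the defining expansion of ℘ by substituting q ↦ q⁻¹t and regrouping by powers of t, namely ℘(q⁻¹t,t) = −1/12 + ∑_{j≥1} (−1)^{j−1} j q^{−j} t^{j} − ∑_{d≥1} ∑_{m|d} m·((−1)^m q^{−m} t^{d+m} − 2 t^{d} + (−1)^m q^{m} t^{d−m}), where for each power of t the sum of contributions converges in ℚ((q)) (the only infinite regrouping occurs in the coefficient of t⁰, where it is the convergent series ∑_{m≥1} m(−1)^m q^m ∈ ℚ[[q]], coming from the terms with d = m). Then ℘(q⁻¹t, t) = ι(℘(q,t)). -/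
noncomputable section

open PowerSeries

/-- The field `ℚ(q)` of rational functions in `q`. -/
abbrev K : Type := RatFunc ℚ

/-- The variable `q ∈ ℚ(q)`. -/
def q : K := RatFunc.X

/-- `s = q + 2 + q⁻¹`. -/
def s : K := q + 2 + q⁻¹

/-- The `m`-th factor of the infinite product defining `φ_{-2,1}`. -/
def phiFactor (m : ℕ) : PowerSeries K :=
  (1 + C q * X ^ m) ^ 2 * (1 + C q⁻¹ * X ^ m) ^ 2 * ((1 - X ^ m)⁻¹) ^ 4

/-- The infinite product `∏_{m ≥ 1} (1 + q tᵐ)² (1 + q⁻¹ tᵐ)² (1 - tᵐ)⁻⁴`, convergent in the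
`t`-adic topology: the coefficient of `t^d` equals that of any partial product
`∏_{m=1}^{N}` with `N ≥ d`, since the `m`-th factor is `≡ 1 mod t^m`. -/
def phiProd : PowerSeries K :=
  PowerSeries.mk fun d => coeff d (∏ m ∈ Finset.Icc 1 d, phiFactor m)

/-- The weak Jacobi form `φ_{-2,1}(q,t)` of weight `-2` and index `1`. -/
def phi : PowerSeries K := C s * phiProd

/-- The Weierstraß elliptic function expansion
`℘(q,t) = -1/12 + q/(1+q)² - ∑_{d≥1} (∑_{m|d} m((-q)^m - 2 + (-q)^{-m})) t^d`. -/
def wp : PowerSeries K :=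
  PowerSeries.mk fun d =>
    if d = 0 then -(1 / 12) + q / (1 + q) ^ 2
    else -∑ m ∈ d.divisors, (m : K) * ((-q) ^ (m : ℤ) - 2 + (-q) ^ (-(m : ℤ)))

/-- The weak Jacobi form `φ_{0,1}(q,t) = 12 ℘(q,t) φ_{-2,1}(q,t)` of weight `0` and index `1`. -/
def phi01 : PowerSeries K := 12 * wp * phi


/-- The `t^e`-coefficient (an element of `ℚ((q))`) of the series `℘(q⁻¹t, t)`, obtained from
the defining expansion of `℘` by substituting `q ↦ q⁻¹t` and regrouping by powers of `t`:
`℘(q⁻¹t,t) = -1/12 + ∑_{j≥1} (-1)^{j-1} j q^{-j} t^j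
  - ∑_{d≥1} ∑_{m|d} m((-1)^m q^{-m} t^{d+m} - 2 t^d + (-1)^m q^m t^{d-m})`.
For `e = 0` the only contributions are `-1/12` and the infinite convergent series
`-∑_{m≥1} (-1)^m m q^m` (from the terms with `d = m`); for `e ≥ 1` the contributions are
`(-1)^{e-1} e q^{-e}` together with the finitely many terms with `d + m = e` (i.e. `m` a proper
divisor of `e`), `d = e` (all `m | e`), and `d - m = e` (i.e. `m | e`). -/
def wpSubCoeff (e : ℕ) : LaurentSeries ℚ :=
  if e = 0 then
    -(1 / 12) - HahnSeries.ofPowerSeries ℤ ℚ (PowerSeries.mk fun m => (-1 : ℚ) ^ m * m)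
  else
    HahnSeries.single (-(e : ℤ)) ((-1 : ℚ) ^ (e - 1) * e)
      - ((∑ m ∈ e.properDivisors, HahnSeries.single (-(m : ℤ)) ((-1 : ℚ) ^ m * m))
          - HahnSeries.C (∑ m ∈ e.divisors, 2 * (m : ℚ))
          + ∑ m ∈ e.divisors, HahnSeries.single ((m : ℤ)) ((-1 : ℚ) ^ m * m))

/-- The series `℘(q⁻¹t, t) ∈ ℚ((q))[[t]]`. -/
def wpSub : PowerSeries (LaurentSeries ℚ) := PowerSeries.mk wpSubCoeff

/-!
Both sides are compared coefficientwise in `t`. For `t⁰` the point is the Laurent expansion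
`q / (1 + q)² = -∑_{m ≥ 1} (-1)^m m q^m`, i.e. `(∑ (-1)^m m q^m) (1 + q)² = -q` in `ℚ[[q]]`.
For `t^e` with `e ≥ 1`, every summand `m((-q)^m - 2 + (-q)^{-m})` is already a Laurent polynomial,
and the extra term `(-1)^{e-1} e q^{-e}` of the substituted series is exactly the missing `m = e`
summand of `-∑_{m ∣ e} (-1)^m m q^{-m}`, the rest of which comes from the proper divisors.
-/

open scoped LaurentSeries RatFunc

theorem PowerSeries.mk_neg_one_pow_mul_mul_one_add_X_sq {R : Type*} [CommRing R] :
    (mk fun m => (-1 : R) ^ m * m) * (1 + X) ^ 2 = -X := by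
  set f : PowerSeries R := mk fun m => (-1 : R) ^ m * m
  have hexpand : f * (1 + X) ^ 2 = f + C (2 : R) * (f * X) + f * X * X := by
    rw [map_ofNat]; ring
  ext n
  rw [hexpand]
  match n with
  | 0 => simp [f]
  | 1 => simp [f, coeff_succ_mul_X]
  | n + 2 =>
    simp only [map_add, map_neg, coeff_mk, coeff_C_mul, coeff_succ_mul_X, coeff_X, Nat.cast_add,
      Nat.cast_ofNat, Nat.cast_one, Nat.reduceEqDiff, ↓reduceIte, neg_zero, f]
    ring

theorem LaurentSeries.single_one_one_div_one_add_sq {F : Type*} [Field F] :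
    (HahnSeries.single 1 1 : F⸨X⸩) / (1 + HahnSeries.single 1 1) ^ 2
      = -HahnSeries.ofPowerSeries ℤ F (mk fun m => (-1 : F) ^ m * m) := by
  have key := congrArg (HahnSeries.ofPowerSeries ℤ F) mk_neg_one_pow_mul_mul_one_add_X_sq
  rw [map_mul, map_pow, map_add, map_one, map_neg, HahnSeries.ofPowerSeries_X] at key
  have hne : (1 + HahnSeries.single 1 1 : F⸨X⸩) ≠ 0 := by
    rw [← HahnSeries.ofPowerSeries_X, ← map_one (HahnSeries.ofPowerSeries ℤ F), ← map_add]
    refine (map_ne_zero_iff _ HahnSeries.ofPowerSeries_injective).2 fun h => ?_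
    simpa using congrArg constantCoeff h
  rw [div_eq_iff (pow_ne_zero 2 hne)]
  linear_combination key

theorem LaurentSeries.natCast_mul_single {R : Type*} [Semiring R] (m : ℕ) (a : ℤ) (r : R) :
    (m : R⸨X⸩) * HahnSeries.single a r = HahnSeries.single a (m * r) := by
  rw [← map_natCast HahnSeries.C m, HahnSeries.C_apply, HahnSeries.single_mul_single, zero_add]

theorem algebraMap_q : algebraMap K ℚ⸨X⸩ q = HahnSeries.single 1 1 :=
  RatFunc.coe_X

theorem algebraMap_neg_q_zpow_natCast (m : ℕ) :
    algebraMap K ℚ⸨X⸩ (-q) ^ (m : ℤ) = HahnSeries.single (m : ℤ) ((-1 : ℚ) ^ m) := by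
  rw [map_neg, algebraMap_q, ← HahnSeries.single_neg, zpow_natCast, HahnSeries.single_pow,
    nsmul_one]

theorem algebraMap_neg_q_zpow_neg_natCast (m : ℕ) :
    algebraMap K ℚ⸨X⸩ (-q) ^ (-(m : ℤ)) = HahnSeries.single (-(m : ℤ)) ((-1 : ℚ) ^ m) := by
  rw [zpow_neg, algebraMap_neg_q_zpow_natCast, HahnSeries.inv_single, ← inv_pow, inv_neg, inv_one]

theorem algebraMap_coeff_zero_wp :
    algebraMap K ℚ⸨X⸩ (coeff 0 wp)
      = -(1 / 12) + HahnSeries.single 1 1 / (1 + HahnSeries.single 1 1) ^ 2 := by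
  rw [wp, coeff_mk, if_pos rfl, map_add, map_neg, map_div₀, map_div₀, map_one, map_ofNat, map_pow,
    map_add, map_one, algebraMap_q]

theorem algebraMap_coeff_wp {d : ℕ} (hd : d ≠ 0) :
    algebraMap K ℚ⸨X⸩ (coeff d wp) = -∑ m ∈ d.divisors,
      (HahnSeries.single (m : ℤ) ((-1 : ℚ) ^ m * m) - 2 * m
        + HahnSeries.single (-(m : ℤ)) ((-1 : ℚ) ^ m * m)) := by
  rw [wp, coeff_mk, if_neg hd, map_neg, map_sum]
  refine congrArg _ (Finset.sum_congr rfl fun m _ => ?_)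
  rw [map_mul, map_natCast, map_add, map_sub, map_ofNat, map_zpow₀, map_zpow₀,
    algebraMap_neg_q_zpow_natCast, algebraMap_neg_q_zpow_neg_natCast, mul_add, mul_sub,
    LaurentSeries.natCast_mul_single, LaurentSeries.natCast_mul_single, mul_comm (m : ℚ),
    mul_comm (m : ℚ⸨X⸩)]

theorem wpSubCoeff_zero :
    wpSubCoeff 0 = -(1 / 12) + HahnSeries.single 1 1 / (1 + HahnSeries.single 1 1) ^ 2 := by
  rw [wpSubCoeff, if_pos rfl, LaurentSeries.single_one_one_div_one_add_sq, sub_eq_add_neg]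

theorem wpSubCoeff_of_ne_zero {e : ℕ} (he : e ≠ 0) :
    wpSubCoeff e = -∑ m ∈ e.divisors,
      (HahnSeries.single (m : ℤ) ((-1 : ℚ) ^ m * m) - 2 * m
        + HahnSeries.single (-(m : ℤ)) ((-1 : ℚ) ^ m * m)) := by
  have hsign : (-1 : ℚ) ^ (e - 1) * e = -((-1) ^ e * e) := by
    obtain ⟨k, rfl⟩ := Nat.exists_eq_succ_of_ne_zero he
    simp [pow_succ]
  rw [wpSubCoeff, if_neg he, hsign, HahnSeries.single_neg, Finset.sum_add_distrib,
    Finset.sum_sub_distrib, ← Nat.cons_self_properDivisors he]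
  simp only [Finset.sum_cons, map_add, map_sum, map_mul, map_ofNat, map_natCast]
  abel

/-- Elliptic invariance of the Weierstraß function: `℘(q⁻¹t, t) = ι(℘(q, t))`
in `ℚ((q))[[t]]`, where `ι` applies to each `t`-coefficient the Laurent expansion at `q = 0`. -/
theorem wp_elliptic_invariance :
    wpSub = PowerSeries.map (@algebraMap (RatFunc ℚ) (LaurentSeries ℚ) _ _ (RatFunc.liftAlgebra ℚ (LaurentSeries ℚ))) wp := by
  ext e
  rw [wpSub, coeff_mk, coeff_map]
  rcases eq_or_ne e 0 with rfl | he
  · rw [wpSubCoeff_zero, algebraMap_coeff_zero_wp]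
  · rw [wpSubCoeff_of_ne_zero he, algebraMap_coeff_wp he]

end
end

section
/- Set s = q + 2 + q⁻¹ ∈ ℚ(q). The series φ₋₂,₁(q,t) is invertible in ℚ(q)[[t]]. For every i ∈ ℤ (negative exponents denoting inverse powers), every integer j ≥ 0, and every d ≥ 0, the coefficient of t^d in φ₋₂,₁(q,t)^i · φ₀,₁(q,t)^j lies in the ℚ-linear span of { s^k : k ∈ ℤ, k ≥ i } inside ℚ(q). -/
noncomputable section

open PowerSeries

/-- Integer powers of `φ_{-2,1}` in `ℚ(q)[[t]]`: negative exponents denote powers of the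
inverse power series (which exists since the constant term `s = q + 2 + q⁻¹` is nonzero). -/
def phiZpow (i : ℤ) : PowerSeries K :=
  if 0 ≤ i then phi ^ i.toNat else (phi⁻¹) ^ (-i).toNat

/-! `φ₋₂,₁ = s · Φ`, where the product `Φ` has constant term `1` and coefficients in `ℚ[s]`,
because `(1 + q x)(1 + q⁻¹ x) = 1 + (s - 2) x + x²`. Likewise `s ℘` has coefficients in `ℚ[s]`:
its constant term is `1 - s / 12` since `q / (1 + q)² = s⁻¹`, and `(-q)ᵐ + (-q)⁻ᵐ` is the Dickson
polynomial `D_m(x, 1)` evaluated at `(-q) + (-q)⁻¹ = 2 - s`. Hence `φ₋₂,₁^i φ₀,₁^j = s^i · Ψ` with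
`Ψ = Φ^i (12 s ℘ Φ)^j` having coefficients in `ℚ[s]`, and `s^i ℚ[s]` is spanned by the `s^k`,
`k ≥ i`. -/

namespace PowerSeries

variable {A : Type*} [CommRing A]

def coeffSubring (S : Subring A) : Subring A⟦X⟧ := (map S.subtype).range

theorem mem_coeffSubring {S : Subring A} {f : A⟦X⟧} :
    f ∈ coeffSubring S ↔ ∀ n, coeff n f ∈ S := by
  refine ⟨?_, fun h => ⟨mk fun n => ⟨coeff n f, h n⟩, ext fun n => ?_⟩⟩
  · rintro ⟨g, rfl⟩ n
    simp
  · simp only [coeff_map, coeff_mk]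
    rfl

theorem C_mem_coeffSubring {S : Subring A} {a : A} (ha : a ∈ S) : C a ∈ coeffSubring S :=
  ⟨C ⟨a, ha⟩, by simp⟩

theorem X_mem_coeffSubring (S : Subring A) : X ∈ coeffSubring S :=
  ⟨X, map_X _⟩

theorem inv_mem_coeffSubring {k : Type*} [Field k] {S : Subring k} {f : k⟦X⟧}
    (hf : f ∈ coeffSubring S) (hf₀ : constantCoeff f = 1) : f⁻¹ ∈ coeffSubring S := by
  obtain ⟨g, rfl⟩ := hf
  have hg₀ : constantCoeff g = ((1 : Sˣ) : S) := by
    refine Subtype.ext ?_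
    rwa [← coeff_zero_eq_constantCoeff_apply, coeff_map, coeff_zero_eq_constantCoeff_apply] at hf₀
  refine ⟨invOfUnit g 1, ?_⟩
  rw [eq_inv_iff_mul_eq_one (by rw [hf₀]; exact one_ne_zero), ← map_mul, invOfUnit_mul g 1 hg₀,
    map_one]

end PowerSeries

theorem zpow_mul_mem_span_zpow_of_mem_adjoin {F L : Type*} [CommSemiring F] [Field L]
    [Algebra F L] {x r : L} (hx : x ≠ 0) (i : ℤ) (hr : r ∈ Algebra.adjoin F {x}) :
    x ^ i * r ∈ Submodule.span F {y : L | ∃ k : ℤ, i ≤ k ∧ y = x ^ k} := by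
  rw [← Subalgebra.mem_toSubmodule, Algebra.adjoin_eq_span] at hr
  induction hr using Submodule.span_induction with
  | mem y hy =>
    obtain ⟨n, rfl⟩ := Submonoid.mem_closure_singleton.1 hy
    exact Submodule.subset_span ⟨i + n, by omega, by rw [zpow_add₀ hx, zpow_natCast]⟩
  | zero => simp
  | add a b _ _ ha hb => rw [mul_add]; exact add_mem ha hb
  | smul c a _ ha => rw [mul_smul_comm]; exact Submodule.smul_mem _ c ha

theorem q_ne_zero : q ≠ 0 := RatFunc.X_ne_zero

theorem one_add_q_ne_zero : (1 : K) + q ≠ 0 := by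
  have : (1 : K) + q = algebraMap (Polynomial ℚ) K (Polynomial.X + 1) := by
    simp [q, RatFunc.algebraMap_X, add_comm]
  rw [this]
  exact RatFunc.algebraMap_ne_zero (Polynomial.X_add_C_ne_zero 1)

theorem s_eq : s = (1 + q) ^ 2 / q := by
  rw [eq_div_iff q_ne_zero, s]
  field_simp [q_ne_zero]
  ring

theorem s_ne_zero : s ≠ 0 := by
  rw [s_eq]
  exact div_ne_zero (pow_ne_zero 2 one_add_q_ne_zero) q_ne_zero

theorem s_mul_q_div_one_add_q_sq : s * (q / (1 + q) ^ 2) = 1 := by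
  rw [s_eq, div_mul_div_comm, mul_comm, div_self]
  exact mul_ne_zero q_ne_zero (pow_ne_zero 2 one_add_q_ne_zero)

abbrev Qs : Subring K := (Algebra.adjoin ℚ {s}).toSubring

theorem s_mem_Qs : s ∈ Qs := Algebra.self_mem_adjoin_singleton ℚ s

theorem neg_q_pow_add_inv_pow_mem_Qs (m : ℕ) : (-q) ^ m + (-q)⁻¹ ^ m ∈ Qs := by
  have hsum : -q + (-q)⁻¹ = 2 - s := by rw [s, inv_neg]; ring
  have hD : (Polynomial.dickson 1 (1 : ℚ) m).map (algebraMap ℚ K) =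
      Polynomial.dickson 1 1 m := by
    rw [Polynomial.map_dickson, map_one]
  have h2s : 2 - s ∈ Algebra.adjoin ℚ {s} := sub_mem (ofNat_mem _ 2) s_mem_Qs
  rw [← Polynomial.dickson_one_one_eval_add_inv _ _ (mul_inv_cancel₀ (neg_ne_zero.2 q_ne_zero)),
    hsum, ← hD, Polynomial.eval_map_algebraMap]
  exact Algebra.adjoin_singleton_le h2s (Polynomial.aeval_mem_adjoin_singleton ℚ _)

theorem one_add_C_q_mul_one_add_C_q_inv (x : K⟦X⟧) :
    (1 + C q * x) * (1 + C q⁻¹ * x) = 1 + C (s - 2) * x + x * x := by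
  have hq : C q * C q⁻¹ = (1 : K⟦X⟧) := by rw [← map_mul, mul_inv_cancel₀ q_ne_zero, map_one]
  rw [s, show q + 2 + q⁻¹ - 2 = q + q⁻¹ by ring, map_add]
  linear_combination (x * x) * hq

theorem one_sub_X_pow_inv_mem {m : ℕ} (hm : m ≠ 0) (S : Subring K) :
    (1 - X ^ m : K⟦X⟧)⁻¹ ∈ coeffSubring S :=
  inv_mem_coeffSubring (sub_mem (one_mem _) (pow_mem (X_mem_coeffSubring S) m))
    (by simp [zero_pow hm])

theorem phiFactor_mem {m : ℕ} (hm : m ≠ 0) : phiFactor m ∈ coeffSubring Qs := by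
  have hX := X_mem_coeffSubring Qs
  have hs2 : C (s - 2) ∈ coeffSubring Qs := C_mem_coeffSubring (sub_mem s_mem_Qs (ofNat_mem _ 2))
  rw [phiFactor, ← mul_pow, one_add_C_q_mul_one_add_C_q_inv]
  have hXm := pow_mem hX m
  exact mul_mem (pow_mem (add_mem (add_mem (one_mem _) (mul_mem hs2 hXm)) (mul_mem hXm hXm)) 2)
    (pow_mem (one_sub_X_pow_inv_mem hm Qs) 4)

theorem phiProd_mem : phiProd ∈ coeffSubring Qs := by
  refine mem_coeffSubring.2 fun d => ?_
  have hprod : ∏ m ∈ Finset.Icc 1 d, phiFactor m ∈ coeffSubring Qs :=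
    prod_mem fun m hm => phiFactor_mem (by simp at hm; omega)
  simpa [phiProd] using mem_coeffSubring.1 hprod d

theorem constantCoeff_phiProd : constantCoeff phiProd = 1 := by
  simp [← coeff_zero_eq_constantCoeff_apply, phiProd]

theorem isUnit_phi : IsUnit phi := by
  rw [isUnit_iff_constantCoeff, phi, map_mul, constantCoeff_C, constantCoeff_phiProd, mul_one]
  exact s_ne_zero.isUnit

theorem exists_phiZpow_eq_C_zpow_mul (i : ℤ) :
    ∃ g ∈ coeffSubring Qs, phiZpow i = C (s ^ i) * g := by
  rw [phiZpow]
  split_ifs with hi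
  · refine ⟨phiProd ^ i.toNat, pow_mem phiProd_mem _, ?_⟩
    rw [phi, mul_pow, ← map_pow, ← zpow_natCast, Int.toNat_of_nonneg hi]
  · have hinv : phi⁻¹ = C s⁻¹ * phiProd⁻¹ := by
      rw [phi, PowerSeries.mul_inv_rev, C_inv, mul_comm]
    refine ⟨(phiProd⁻¹) ^ (-i).toNat,
      pow_mem (inv_mem_coeffSubring phiProd_mem constantCoeff_phiProd) _, ?_⟩
    rw [hinv, mul_pow, ← map_pow, inv_pow, ← zpow_natCast, Int.toNat_of_nonneg (by omega),
      ← zpow_neg, neg_neg]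

theorem C_s_mul_wp_mem : C s * wp ∈ coeffSubring Qs := by
  refine mem_coeffSubring.2 fun d => ?_
  rw [coeff_C_mul, wp, coeff_mk]
  split_ifs
  · rw [mul_add, s_mul_q_div_one_add_q_sq]
    have h12 : -(1 / 12 : K) = algebraMap ℚ K (-(1 / 12)) := by simp
    exact add_mem (mul_mem s_mem_Qs (h12 ▸ Subalgebra.algebraMap_mem _ _)) (one_mem _)
  · refine mul_mem s_mem_Qs (neg_mem (sum_mem fun m _ => mul_mem (natCast_mem _ m) ?_))
    rw [zpow_neg, zpow_natCast, ← inv_pow, sub_add_eq_add_sub]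
    exact sub_mem (neg_q_pow_add_inv_pow_mem_Qs m) (ofNat_mem _ 2)

theorem phi01_mem : phi01 ∈ coeffSubring Qs := by
  have h : phi01 = 12 * (C s * wp) * phiProd := by rw [phi01, phi]; ring
  rw [h]
  exact mul_mem (mul_mem (ofNat_mem _ 12) C_s_mul_wp_mem) phiProd_mem

/-- `φ_{-2,1}(q,t)` is invertible in `ℚ(q)[[t]]`, and for every `i ∈ ℤ`,
`j ≥ 0` and `d ≥ 0` the coefficient of `t^d` in `φ_{-2,1}^i φ_{0,1}^j` lies in the `ℚ`-linear
span of the powers `s^k`, `k ≥ i`, where `s = q + 2 + q⁻¹`. -/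
theorem coeff_phiZpow_mul_phi01_pow_mem_span :
    IsUnit phi ∧
    ∀ (i : ℤ) (j d : ℕ),
      coeff d (phiZpow i * phi01 ^ j) ∈
        Submodule.span ℚ {x : K | ∃ k : ℤ, i ≤ k ∧ x = s ^ k} := by
  refine ⟨isUnit_phi, fun i j d => ?_⟩
  obtain ⟨g, hg, hphi⟩ := exists_phiZpow_eq_C_zpow_mul i
  have hrest : g * phi01 ^ j ∈ coeffSubring Qs := mul_mem hg (pow_mem phi01_mem j)
  rw [hphi, mul_assoc, coeff_C_mul]
  exact zpow_mul_mem_span_zpow_of_mem_adjoin s_ne_zero i (mem_coeffSubring.1 hrest d)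

end
end

section
/- In the ring ℚ[q⁻¹][[t]] of formal power series in t with coefficients in the polynomial ring ℚ[q⁻¹], the series B = ∑_{d≥2} ∑_{n=1}^{d−1} (−1)^{n−1} · n · (∑_{k | gcd(n,d)} 1/k²) · q^{−n} t^d has zero constant term, and exp(B) = ∏_{ℓ≥1} ∏_{m≥1} (1 − (−1)^ℓ q^{−ℓ} t^{ℓ+m})^{ℓ}, the product converging in the t-adic topology. -/
/-!
Both sides solve `F' = B' F` with `F(0) = 1`, and this first-order equation has a unique
solution. For `exp B` this is the chain rule. For the product, the logarithmic derivative of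
the factor `(1 - c t^s)^ℓ` (with `c = (-1)^ℓ q^{-ℓ}`, `s = ℓ + m`) is
`-ℓ s c t^{s-1} / (1 - c t^s)`, whose `t^{d-1}`-coefficient is `-ℓ s c^{d/s}` when `s ∣ d`.
Summing over `(ℓ, m)` and substituting `n = ℓ d / s`, `k = d / s` turns this into
`∑_{n<d} ∑_{k ∣ (n,d)} (-1)^{n-1} n d / k² q^{-n}`, the `t^{d-1}`-coefficient of `B'`.
The infinite product is handled through its partial products, which agree with it to
increasing `t`-adic order.
-/

noncomputable section

open PowerSeries

/-- The formal exponential of a power series `B` (with zero constant term) in `t` over a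
`ℚ`-algebra: `exp B = ∑_k B^k / k!`, where for a series of positive `t`-adic order the
`t^d`-coefficient only receives contributions from `k ≤ d`. -/
def expT {R : Type*} [CommRing R] [Algebra ℚ R] (B : PowerSeries R) : PowerSeries R :=
  PowerSeries.mk fun d =>
    ∑ k ∈ Finset.range (d + 1), (k.factorial : ℚ)⁻¹ • coeff (R := R) d (B ^ k)

/-- We model the ring `ℚ[q⁻¹]` of polynomials in `q⁻¹` as `Polynomial ℚ`, the variable
`Polynomial.X` standing for `q⁻¹`. The series
`B = ∑_{d≥2} ∑_{n=1}^{d-1} (-1)^{n-1} n (∑_{k | gcd(n,d)} 1/k²) q^{-n} t^d ∈ ℚ[q⁻¹][[t]]`. -/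
def B9 : PowerSeries (Polynomial ℚ) :=
  PowerSeries.mk fun d =>
    ∑ n ∈ Finset.Ico 1 d,
      Polynomial.C ((-1 : ℚ) ^ (n - 1) * n * ∑ k ∈ (Nat.gcd n d).divisors, 1 / (k : ℚ) ^ 2) *
        Polynomial.X ^ n

/-- The factor `(1 - (-1)^ℓ q^{-ℓ} t^{ℓ+m})^ℓ` of the infinite product, an element of
`ℚ[q⁻¹][[t]]` (with `Polynomial.X` standing for `q⁻¹`). -/
def prodFactor9 (l m : ℕ) : PowerSeries (Polynomial ℚ) :=
  (1 - C (R := Polynomial ℚ) ((-1 : Polynomial ℚ) ^ l * Polynomial.X ^ l) * X ^ (l + m)) ^ l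

/-- The infinite product `∏_{ℓ,m ≥ 1} (1 - (-1)^ℓ q^{-ℓ} t^{ℓ+m})^ℓ`, convergent in the
`t`-adic topology: the coefficient of `t^d` equals that of any partial product over
`1 ≤ ℓ, m ≤ N` with `N ≥ d`, since the `(ℓ,m)`-factor is `≡ 1 mod t^{ℓ+m}`. -/
def prod9 : PowerSeries (Polynomial ℚ) :=
  PowerSeries.mk fun d =>
    coeff (R := Polynomial ℚ) d (∏ p ∈ Finset.Icc 1 d ×ˢ Finset.Icc 1 d, prodFactor9 p.1 p.2)

namespace PowerSeries

section CommSemiring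

variable {R : Type*} [CommSemiring R]

theorem X_pow_dvd_derivative {f : R⟦X⟧} {n : ℕ} (h : X ^ (n + 1) ∣ f) : X ^ n ∣ d⁄dX R f := by
  rw [X_pow_dvd_iff] at h ⊢
  intro m hm
  rw [coeff_derivative, h (m + 1) (by omega), zero_mul]

theorem coeff_pow_eq_zero_of_lt {B : R⟦X⟧} (hB : constantCoeff B = 0) {d k : ℕ} (h : d < k) :
    coeff d (B ^ k) = 0 :=
  X_pow_dvd_iff.mp (pow_dvd_pow_of_dvd (X_dvd_iff.mpr hB) k) d h

theorem derivative_prod_of_forall {ι : Type*} (s : Finset ι) (F G : ι → R⟦X⟧)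
    (h : ∀ i ∈ s, d⁄dX R (F i) = G i * F i) :
    d⁄dX R (∏ i ∈ s, F i) = (∑ i ∈ s, G i) * ∏ i ∈ s, F i := by
  induction s using Finset.cons_induction with
  | empty => simp
  | cons a s ha ih =>
    rw [Finset.prod_cons, Finset.sum_cons, Derivation.leibniz, smul_eq_mul, smul_eq_mul,
      ih fun i hi => h i (Finset.mem_cons_of_mem hi), h a (Finset.mem_cons_self a s)]
    ring

theorem eq_of_derivative_eq_mul [IsAddTorsionFree R] {E F G : R⟦X⟧}
    (hF : d⁄dX R F = E * F) (hG : d⁄dX R G = E * G) (h0 : constantCoeff F = constantCoeff G) :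
    F = G := by
  ext n
  induction n using Nat.strong_induction_on with
  | _ n ih =>
    cases n with
    | zero => simpa using h0
    | succ n =>
      have h : coeff n (d⁄dX R F) = coeff n (d⁄dX R G) := by
        rw [hF, hG, coeff_mul, coeff_mul]
        refine Finset.sum_congr rfl fun p hp => ?_
        rw [ih p.2 (Nat.lt_succ_of_le (Finset.HasAntidiagonal.antidiagonal.snd_le hp))]
      rw [coeff_derivative, coeff_derivative] at h
      exact nsmul_right_injective n.succ_ne_zero (by simpa [nsmul_eq_mul, mul_comm] using h)

end CommSemiring

section CommRing

variable {R : Type*} [CommRing R]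

theorem derivative_eq_mul_of_forall_X_pow_dvd {E F : R⟦X⟧} (P : ℕ → R⟦X⟧)
    (hP : ∀ N, X ^ (N + 1) ∣ F - P N) (hPE : ∀ N, X ^ N ∣ d⁄dX R (P N) - E * P N) :
    d⁄dX R F = E * F := by
  ext n
  have key : d⁄dX R F - E * F = d⁄dX R (F - P (n + 1)) + (d⁄dX R (P (n + 1)) - E * P (n + 1))
      - E * (F - P (n + 1)) := by
    rw [map_sub]; ring
  have h : X ^ (n + 1) ∣ d⁄dX R F - E * F := by
    rw [key]
    exact dvd_sub (dvd_add (X_pow_dvd_derivative (hP _)) (hPE _))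
      (((pow_dvd_pow X (by omega)).trans (hP _)).mul_left _)
  simpa [sub_eq_zero] using X_pow_dvd_iff.mp h n (by omega)

theorem X_pow_dvd_prod_sub_one {ι : Type*} {s : Finset ι} {F : ι → R⟦X⟧} {n : ℕ}
    (h : ∀ i ∈ s, X ^ n ∣ F i - 1) : X ^ n ∣ ∏ i ∈ s, F i - 1 := by
  refine Finset.prod_induction F (fun x => X ^ n ∣ x - 1) (fun x y hx hy => ?_) (by simp) h
  rw [show x * y - 1 = x * (y - 1) + (x - 1) by ring]
  exact dvd_add (hy.mul_left x) hx

theorem X_pow_dvd_one_sub_C_mul_X_pow_pow_sub_one (c : R) {n s : ℕ} (h : n ≤ s) (l : ℕ) :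
    X ^ n ∣ (1 - C c * X ^ s) ^ l - 1 := by
  have hl := sub_dvd_pow_sub_pow (1 - C c * X ^ s) 1 l
  rw [one_pow, sub_sub_cancel_left] at hl
  exact (dvd_neg.mpr ((pow_dvd_pow X h).trans (dvd_mul_left _ _))).trans hl

/-- `1 / (1 - c X^s)`. -/
def geomSeries (c : R) (s : ℕ) : R⟦X⟧ := (rescale c (mk 1)).subst (X ^ s : R⟦X⟧)

theorem coeff_geomSeries (c : R) {s : ℕ} (hs : s ≠ 0) (n : ℕ) :
    coeff n (geomSeries c s) = if s ∣ n then c ^ (n / s) else 0 := by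
  simp [geomSeries, hs]

theorem geomSeries_mul_one_sub (c : R) {s : ℕ} (hs : s ≠ 0) :
    geomSeries c s * (1 - C c * X ^ s) = 1 := by
  have h := congrArg (fun f => substAlgHom (HasSubst.X_pow (R := R) hs) (rescale c f))
    (mk_one_mul_one_sub_eq_one R)
  simp only [map_mul, map_sub, map_one, rescale_X, coe_substAlgHom] at h
  simpa [geomSeries, subst_X (HasSubst.X_pow hs), ← Polynomial.coe_C,
    subst_coe (HasSubst.X_pow hs)] using h

def logDerivFactor (c : R) (s l : ℕ) : R⟦X⟧ :=
  -((l * s : ℕ) : R⟦X⟧) * C c * X ^ (s - 1) * geomSeries c s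

theorem derivative_one_sub_C_mul_X_pow_pow (c : R) {s : ℕ} (hs : s ≠ 0) (l : ℕ) :
    d⁄dX R ((1 - C c * X ^ s) ^ l) = logDerivFactor c s l * (1 - C c * X ^ s) ^ l := by
  have hY : d⁄dX R (1 - C c * X ^ s) = -((s : R⟦X⟧) * C c * X ^ (s - 1)) := by
    simp only [map_sub, Derivation.map_one_eq_zero, Derivation.leibniz, Derivation.leibniz_pow,
      derivative_X, smul_eq_mul, mul_one, nsmul_eq_mul, derivative_C, mul_zero, add_zero, zero_sub,
      neg_inj]
    ring
  cases l with
  | zero => simp [logDerivFactor]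
  | succ l =>
    rw [derivative_pow, hY, logDerivFactor, add_tsub_cancel_right]
    push_cast
    linear_combination (((l + 1) * s : R⟦X⟧) * C c * X ^ (s - 1) * (1 - C c * X ^ s) ^ l) *
      geomSeries_mul_one_sub c hs

theorem coeff_logDerivFactor (c : R) {s : ℕ} (hs : s ≠ 0) (l a : ℕ) :
    coeff a (logDerivFactor c s l) =
      if s ∣ a + 1 then -((l * s : ℕ) : R) * c ^ ((a + 1) / s) else 0 := by
  have hX : X * logDerivFactor c s l = C (-((l * s : ℕ) : R)) * (geomSeries c s - 1) := by
    have hXs : X * X ^ (s - 1) = (X : R⟦X⟧) ^ s := by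
      rw [← pow_succ', Nat.sub_add_cancel (Nat.pos_of_ne_zero hs)]
    rw [logDerivFactor, map_neg, map_natCast]
    linear_combination (-((l * s : ℕ) : R⟦X⟧) * C c * geomSeries c s) * hXs +
      ((l * s : ℕ) : R⟦X⟧) * geomSeries_mul_one_sub c hs
  rw [← coeff_succ_X_mul, hX, coeff_C_mul, map_sub, coeff_geomSeries c hs, coeff_one]
  split_ifs <;> simp_all

variable [Algebra ℚ R]

theorem expT_eq_subst_exp {B : R⟦X⟧} (hB : constantCoeff B = 0) :
    expT B = (exp R).subst B := by
  ext d
  rw [expT, coeff_mk, coeff_subst' (HasSubst.of_constantCoeff_zero' hB),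
    finsum_eq_sum_of_support_subset (s := Finset.range (d + 1))]
  · refine Finset.sum_congr rfl fun k _ => ?_
    rw [coeff_exp, algebraMap_smul, one_div]
  · intro k hk
    rw [Function.mem_support] at hk
    rw [Finset.coe_range, Set.mem_Iio, Nat.lt_succ_iff]
    by_contra h
    exact hk (by rw [coeff_pow_eq_zero_of_lt hB (not_le.mp h), smul_zero])

theorem derivative_expT {B : R⟦X⟧} (hB : constantCoeff B = 0) :
    d⁄dX R (expT B) = d⁄dX R B * expT B := by
  rw [expT_eq_subst_exp hB, derivative_subst (HasSubst.of_constantCoeff_zero' hB), derivative_exp,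
    mul_comm]

theorem constantCoeff_expT (B : R⟦X⟧) : constantCoeff (expT B) = 1 := by
  rw [← coeff_zero_eq_constantCoeff_apply, expT, coeff_mk]
  simp

end CommRing

end PowerSeries

open Finset

theorem Finset.sum_filter_add_dvd_eq_sum_divisors_gcd {M : Type*} [AddCommMonoid M]
    (F : ℕ → ℕ → M) {d N : ℕ} (hd : 0 < d) (hdN : d ≤ N) :
    ∑ p ∈ (Icc 1 N ×ˢ Icc 1 N).filter (fun p => p.1 + p.2 ∣ d), F p.1 p.2 =
      ∑ n ∈ Ico 1 d, ∑ k ∈ (n.gcd d).divisors, F (n / k) (d / k - n / k) := by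
  rw [sum_sigma']
  refine sum_nbij' (fun p => ⟨p.1 * (d / (p.1 + p.2)), d / (p.1 + p.2)⟩)
    (fun x => (x.1 / x.2, d / x.2 - x.1 / x.2)) ?_ ?_ ?_ ?_ ?_
  · rintro ⟨l, m⟩ hp
    simp only [mem_filter, mem_product, mem_Icc] at hp
    obtain ⟨⟨⟨hl, -⟩, hm, -⟩, k, rfl⟩ := hp
    have hk : 0 < k := Nat.pos_of_mul_pos_left hd
    rw [Nat.mul_div_cancel_left k (by omega), mem_sigma, mem_Ico, Nat.mem_divisors]
    exact ⟨⟨by nlinarith, by nlinarith⟩, Nat.dvd_gcd (dvd_mul_left k l) (dvd_mul_left k _),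
      (Nat.gcd_pos_of_pos_right _ hd).ne'⟩
  · rintro ⟨n, k⟩ hx
    simp only [mem_sigma, mem_Ico, Nat.mem_divisors, Nat.dvd_gcd_iff] at hx
    obtain ⟨⟨hn, hnd⟩, ⟨⟨a, rfl⟩, b, rfl⟩, -⟩ := hx
    have hk : 0 < k := Nat.pos_of_mul_pos_right hn
    have hab : a < b := Nat.lt_of_mul_lt_mul_left hnd
    simp only [Nat.mul_div_cancel_left _ hk, mem_filter, mem_product, mem_Icc,
      Nat.add_sub_cancel' hab.le, dvd_mul_left, and_true]
    have : 0 < a := Nat.pos_of_mul_pos_left hn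
    have : b ≤ k * b := Nat.le_mul_of_pos_left b hk
    have : a ≤ k * a := Nat.le_mul_of_pos_left a hk
    omega
  · rintro ⟨l, m⟩ hp
    simp only [mem_filter, mem_product, mem_Icc] at hp
    obtain ⟨⟨⟨hl, -⟩, hm, -⟩, k, rfl⟩ := hp
    have hk : 0 < k := Nat.pos_of_mul_pos_left hd
    simp [Nat.mul_div_cancel_left k (by omega : 0 < l + m), hk]
  · rintro ⟨n, k⟩ hx
    simp only [mem_sigma, mem_Ico, Nat.mem_divisors, Nat.dvd_gcd_iff] at hx
    obtain ⟨⟨hn, hnd⟩, ⟨⟨a, rfl⟩, b, rfl⟩, -⟩ := hx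
    have hk : 0 < k := Nat.pos_of_mul_pos_right hn
    have hab : a < b := Nat.lt_of_mul_lt_mul_left hnd
    simp [Nat.mul_div_cancel_left _ hk, Nat.add_sub_cancel' hab.le,
      Nat.mul_div_cancel k (by omega : 0 < b), mul_comm]
  · rintro ⟨l, m⟩ hp
    simp only [mem_filter, mem_product, mem_Icc] at hp
    obtain ⟨⟨⟨hl, -⟩, hm, -⟩, k, rfl⟩ := hp
    have hk : 0 < k := Nat.pos_of_mul_pos_left hd
    simp [Nat.mul_div_cancel_left k (by omega : 0 < l + m), hk]

theorem neg_mul_pow_eq_C_mul_X_pow (k a b : ℕ) (hk : 0 < k) (ha : 0 < a) :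
    -((a * b : ℕ) : Polynomial ℚ) * ((-1) ^ a * Polynomial.X ^ a) ^ k =
      Polynomial.C ((-1 : ℚ) ^ (k * a - 1) * (k * a : ℕ) * (1 / (k : ℚ) ^ 2)) *
        Polynomial.X ^ (k * a) * ((k * b : ℕ) : Polynomial ℚ) := by
  have hsign : (-1 : ℚ) ^ (k * a - 1) = -(-1) ^ (k * a) := by
    obtain ⟨j, hj⟩ : ∃ j, k * a = j + 1 :=
      ⟨k * a - 1, by have := Nat.mul_pos hk ha; omega⟩
    rw [hj, Nat.add_sub_cancel, pow_succ, mul_neg_one, neg_neg]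
  have hC : (-1 : ℚ) ^ (k * a - 1) * (k * a : ℕ) * (1 / (k : ℚ) ^ 2) * (k * b : ℕ) =
      -(a * b : ℕ) * (-1) ^ (k * a) := by
    rw [hsign]; field_simp; push_cast; ring
  rw [mul_pow, ← pow_mul, ← pow_mul, mul_comm a k, ← Polynomial.C_eq_natCast (k * b),
    mul_right_comm, ← map_mul, hC]
  simp [mul_assoc]

def partialProd9 (N : ℕ) : PowerSeries (Polynomial ℚ) :=
  ∏ p ∈ Icc 1 N ×ˢ Icc 1 N, prodFactor9 p.1 p.2

def logDerivSum9 (N : ℕ) : PowerSeries (Polynomial ℚ) :=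
  ∑ p ∈ Icc 1 N ×ˢ Icc 1 N, logDerivFactor ((-1) ^ p.1 * Polynomial.X ^ p.1) (p.1 + p.2) p.1

theorem derivative_partialProd9 (N : ℕ) :
    d⁄dX _ (partialProd9 N) = logDerivSum9 N * partialProd9 N :=
  derivative_prod_of_forall _ _ _ fun p hp =>
    derivative_one_sub_C_mul_X_pow_pow _ (by simp only [mem_product, mem_Icc] at hp; omega) p.1

theorem coeff_logDerivSum9 {a N : ℕ} (h : a < N) :
    coeff a (logDerivSum9 N) = coeff a (d⁄dX _ B9) := by
  set F : ℕ → ℕ → Polynomial ℚ := fun l m =>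
    -((l * (l + m) : ℕ) : Polynomial ℚ) * ((-1) ^ l * Polynomial.X ^ l) ^ ((a + 1) / (l + m))
  have hlhs : coeff a (logDerivSum9 N) =
      ∑ p ∈ (Icc 1 N ×ˢ Icc 1 N).filter (fun p => p.1 + p.2 ∣ a + 1), F p.1 p.2 := by
    rw [sum_filter, logDerivSum9, map_sum]
    exact sum_congr rfl fun p hp =>
      coeff_logDerivFactor _ (by simp only [mem_product, mem_Icc] at hp; omega) _ _
  rw [hlhs, sum_filter_add_dvd_eq_sum_divisors_gcd F (by omega) (by omega : a + 1 ≤ N),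
    coeff_derivative, ← Nat.cast_add_one, B9, coeff_mk, sum_mul]
  simp only [F]
  generalize a + 1 = d
  refine sum_congr rfl fun n hn => ?_
  rw [mul_sum, map_sum, sum_mul, sum_mul]
  refine sum_congr rfl fun k hk => ?_
  obtain ⟨⟨i, rfl⟩, j, rfl⟩ := Nat.dvd_gcd_iff.mp (Nat.dvd_of_mem_divisors hk)
  rw [mem_Ico] at hn
  have hk : 0 < k := Nat.pos_of_mul_pos_right hn.1
  have hij : i < j := Nat.lt_of_mul_lt_mul_left hn.2
  simp only [Nat.mul_div_cancel_left _ hk, Nat.add_sub_cancel' hij.le,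
    Nat.mul_div_cancel k (by omega : 0 < j)]
  exact neg_mul_pow_eq_C_mul_X_pow k i j hk (Nat.pos_of_mul_pos_left hn.1)

theorem X_pow_dvd_partialProd9_sub {d N : ℕ} (h : d ≤ N) :
    X ^ (d + 1) ∣ partialProd9 N - partialProd9 d := by
  have hsub : Icc 1 d ×ˢ Icc 1 d ⊆ Icc 1 N ×ˢ Icc 1 N :=
    product_subset_product (Icc_subset_Icc_right h) (Icc_subset_Icc_right h)
  rw [partialProd9, partialProd9, ← prod_sdiff hsub, ← sub_one_mul]
  refine dvd_mul_of_dvd_left (X_pow_dvd_prod_sub_one fun p hp => ?_) _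
  simp only [mem_sdiff, mem_product, mem_Icc] at hp
  exact X_pow_dvd_one_sub_C_mul_X_pow_pow_sub_one _ (by omega) _

theorem coeff_prod9 (d : ℕ) : coeff d prod9 = coeff d (partialProd9 d) := by
  rw [prod9, coeff_mk]
  rfl

theorem X_pow_dvd_prod9_sub_partialProd9 (N : ℕ) : X ^ (N + 1) ∣ prod9 - partialProd9 N := by
  refine X_pow_dvd_iff.mpr fun d hd => ?_
  have h := X_pow_dvd_iff.mp (X_pow_dvd_partialProd9_sub (Nat.lt_succ_iff.mp hd)) d (by omega)
  rw [map_sub, sub_eq_zero] at h ⊢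
  rw [h, coeff_prod9]

theorem derivative_prod9 : d⁄dX _ prod9 = d⁄dX _ B9 * prod9 := by
  refine derivative_eq_mul_of_forall_X_pow_dvd partialProd9 X_pow_dvd_prod9_sub_partialProd9
    fun N => ?_
  rw [derivative_partialProd9, ← sub_mul]
  refine dvd_mul_of_dvd_left (X_pow_dvd_iff.mpr fun a ha => ?_) _
  rw [map_sub, coeff_logDerivSum9 ha, sub_self]

theorem constantCoeff_B9 : constantCoeff B9 = 0 := by
  simp [B9, ← coeff_zero_eq_constantCoeff_apply]

theorem constantCoeff_prod9 : constantCoeff prod9 = 1 := by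
  rw [← coeff_zero_eq_constantCoeff_apply]
  simp [prod9]

/-- The series `B` has zero constant term and
`exp(B) = ∏_{ℓ,m ≥ 1} (1 - (-1)^ℓ q^{-ℓ} t^{ℓ+m})^ℓ` in `ℚ[q⁻¹][[t]]`. -/
theorem exp_eq_prod_inverse_side :
    constantCoeff (R := Polynomial ℚ) B9 = 0 ∧ expT B9 = prod9 :=
  ⟨constantCoeff_B9, eq_of_derivative_eq_mul (derivative_expT constantCoeff_B9) derivative_prod9
    (by rw [constantCoeff_expT, constantCoeff_prod9])⟩

end
end
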